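/- In a simple binary matroid, every triangle is a modular flat. -/

import Mathlib

open Set

instance : Fact (Nat.Prime 5) := ⟨by norm_num⟩

universe u

variable {α : Type u} {β : Type u}

namespace Matroid

/-- Deletion of a set of elements from a matroid. -/
def del (M : Matroid α) (D : Set α) : Matroid α := M ↾ (M.E \ D)

/-- Contraction of a set of elements, defined by duality. -/
def con (M : Matroid α) (C : Set α) : Matroid α := ((M✶.del C))✶

/-- `N` is a minor of `M`. -/
def MinorOf (N M : Matroid α) : Prop := ∃ C D : Set α, (M.con C).del D = N

/-- A function `e` is an isomorphism from `M` to `N`. -/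
def IsIsoMap (M : Matroid α) (N : Matroid β) (e : α → β) : Prop :=
  Set.BijOn e M.E N.E ∧ ∀ I ⊆ M.E, (M.Indep I ↔ N.Indep (e '' I))

/-- `M` and `N` are isomorphic matroids. -/
def IsIsoTo (M : Matroid α) (N : Matroid β) : Prop := ∃ e : α → β, IsIsoMap M N e

/-- `M` has a minor isomorphic to `N`. -/
def HasIsoMinor (M : Matroid α) (N : Matroid β) : Prop :=
  ∃ C D : Set α, IsIsoTo ((M.con C).del D) N

/-- The (extended) rank of a set in a matroid: supremum of cardinalities of
independent subsets. -/
noncomputable def eRk' (M : Matroid α) (X : Set α) : ℕ∞ :=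
  ⨆ I ∈ {I | M.Indep I ∧ I ⊆ X}, I.encard

/-- The (extended) rank of a matroid. -/
noncomputable def eRank' (M : Matroid α) : ℕ∞ := M.eRk' M.E

/-- A circuit: a minimal dependent set. -/
def IsCircuit' (M : Matroid α) (C : Set α) : Prop :=
  M.Dep C ∧ ∀ D, D ⊂ C → M.Indep D

/-- A triangle: a 3-element circuit. -/
def IsTriangle (M : Matroid α) (T : Set α) : Prop := M.IsCircuit' T ∧ T.encard = 3

/-- A triad: a 3-element cocircuit. -/
def IsTriad (M : Matroid α) (T : Set α) : Prop := M✶.IsCircuit' T ∧ T.encard = 3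

/-- A `k`-separation in the sense of Tutte. -/
def IsKSep (M : Matroid α) (k : ℕ) (X : Set α) : Prop :=
  X ⊆ M.E ∧ (k : ℕ∞) ≤ X.encard ∧ (k : ℕ∞) ≤ (M.E \ X).encard ∧
    M.eRk' X + M.eRk' (M.E \ X) + 1 ≤ M.eRank' + k

/-- Tutte `n`-connectivity: there is no `k`-separation for any `k < n`. -/
def TutteConn (M : Matroid α) (n : ℕ) : Prop := ∀ k < n, ∀ X, ¬ M.IsKSep k X

/-- 3-connectivity. -/
def ThreeConn (M : Matroid α) : Prop := M.TutteConn 3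

/-- A matroid is 3-connected up to series and parallel sets if it is connected and
every 2-separation has a side that is a parallel set (rank at most 1) or a
series set (corank at most 1). -/
def ThreeConnUpToSP (M : Matroid α) : Prop :=
  M.TutteConn 2 ∧ ∀ X, M.IsKSep 2 X →
    (M.eRk' X ≤ 1 ∨ M✶.eRk' X ≤ 1 ∨ M.eRk' (M.E \ X) ≤ 1 ∨ M✶.eRk' (M.E \ X) ≤ 1)

/-- A simple matroid: every subset of the ground set with at most two elements
is independent. -/
def SimpleM (M : Matroid α) : Prop := ∀ X ⊆ M.E, X.encard ≤ 2 → M.Indep X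

/-- A modular flat. -/
def ModularFlat (M : Matroid α) (F : Set α) : Prop :=
  M.IsFlat F ∧ ∀ F', M.IsFlat F' →
    M.eRk' F + M.eRk' F' = M.eRk' (F ∪ F') + M.eRk' (F ∩ F')


/-- `M` is the matroid represented (on its ground set) by the vector family `φ`. -/
def IsRepBy (𝔽 : Type) [Field 𝔽] {V : Type*} [AddCommGroup V] [Module 𝔽 V]
    (M : Matroid α) (φ : α → V) : Prop :=
  ∀ I ⊆ M.E, (M.Indep I ↔ LinearIndependent 𝔽 (fun x : I => φ x))

/-- `M` is representable over the field `𝔽`. -/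
def FieldRepresentable (𝔽 : Type) [Field 𝔽] (M : Matroid α) : Prop :=
  ∃ φ : α → (α →₀ 𝔽), M.IsRepBy 𝔽 (V := α →₀ 𝔽) φ

/-- `M` is a binary matroid. -/
def Binary (M : Matroid α) : Prop := M.FieldRepresentable (ZMod 2)

/-- `M` is isomorphic to the Fano matroid `F₇`: its ground set is in bijection with
the seven nonzero vectors of `GF(2)³`, with independence given by linear independence. -/
def IsFano (M : Matroid α) : Prop :=
  ∃ g : α → (Fin 3 → ZMod 2),
    Set.BijOn g M.E {v | v ≠ 0} ∧ M.IsRepBy (ZMod 2) g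

open Fin.NatCast in
/-- The standard binary representation vectors of `R₁₀`: the first five columns are
the identity, the last five are the circular shifts of `(1,1,0,0,1)`. -/
def r10vec (i : ℕ) : Fin 5 → ZMod 2 :=
  if i < 5 then (fun k => if (k : ℕ) = i then 1 else 0)
  else (fun k => ![1,1,0,0,1] (k - ((i - 5 : ℕ) : Fin 5)))

/-- `M` is isomorphic to `R₁₀`. -/
def IsR10 (M : Matroid α) : Prop :=
  ∃ g : α → Fin 10, Set.BijOn g M.E Set.univ ∧
    M.IsRepBy (ZMod 2) (fun x => r10vec (g x))

/-- `M` is (a labeled copy of) `R₁₀` on ground set `{0, …, 9} ⊆ ℕ` with the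
standard labeling. -/
def IsR10Labeled (M : Matroid ℕ) : Prop :=
  M.E = {n | n < 10} ∧ M.IsRepBy (ZMod 2) r10vec

/-- The uniform matroid `U_{r,n}` (up to isomorphism). -/
def IsUniformM (M : Matroid α) (r n : ℕ) : Prop :=
  M.E.encard = n ∧ ∀ I ⊆ M.E, (M.Indep I ↔ I.encard ≤ r)

/-- `M` has a minor isomorphic to `F₇` or to `F₇*`. -/
def HasFanoMinor (M : Matroid α) : Prop :=
  ∃ C D : Set α, IsFano ((M.con C).del D) ∨ IsFano ((M.con C).del D)✶

/-- `M` is Fano-fragile: `M` is binary, has an `{F₇, F₇*}`-minor, and for each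
element `e`, at most one of `M ⧹ e`, `M / e` has an `{F₇, F₇*}`-minor. -/
def FanoFragile (M : Matroid α) : Prop :=
  M.Binary ∧ M.HasFanoMinor ∧
    ∀ e ∈ M.E, ¬ (HasFanoMinor (M.del {e}) ∧ HasFanoMinor (M.con {e}))

/-- `M` has a minor isomorphic to `U_{2,5}` or `U_{3,5}`. -/
def HasU25U35Minor (M : Matroid α) : Prop :=
  ∃ C D : Set α, IsUniformM ((M.con C).del D) 2 5 ∨ IsUniformM ((M.con C).del D) 3 5

/-- `M` is strictly `{U_{2,5}, U_{3,5}}`-fragile. -/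
def StrictlyU25U35Fragile (M : Matroid α) : Prop :=
  M.HasU25U35Minor ∧
    ∀ e ∈ M.E, ¬ (HasU25U35Minor (M.del {e}) ∧ HasU25U35Minor (M.con {e}))

/-- The binary representation vectors of the rank-`n` wheel `W_n`:
`Sum.inl i` is the spoke `sᵢ` (a standard basis vector) and `Sum.inr i` is the rim
element `rᵢ` joining spokes `i` and `i+1 (mod n)`. -/
def wheelVec (n : ℕ) : Fin n ⊕ Fin n → (Fin n → ZMod 2) :=
  Sum.elim (fun i j => if (j : ℕ) = (i : ℕ) then 1 else 0)
    (fun i j => if (j : ℕ) = (i : ℕ) ∨ (j : ℕ) = ((i : ℕ) + 1) % n then 1 else 0)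

/-- `W` is a wheel of rank `n ≥ 2` having `(a, b, c)` as a triangle in which `a` and
`c` are spoke elements and `b` is the rim element joining them. -/
def IsWheel (W : Matroid α) (n : ℕ) (a b c : α) : Prop :=
  ∃ h : 2 ≤ n, ∃ g : α → (Fin n ⊕ Fin n),
    Set.BijOn g W.E Set.univ ∧
    g a = Sum.inl ⟨0, by omega⟩ ∧ g b = Sum.inr ⟨0, by omega⟩ ∧
    g c = Sum.inl ⟨1, by omega⟩ ∧
    W.IsRepBy (ZMod 2) (fun x => wheelVec n (g x))

/-- `M` is a wheel (of some rank at least 2). -/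
def IsWheelMatroid (M : Matroid α) : Prop := ∃ (n : ℕ) (a b c : α), M.IsWheel n a b c

/-- The rational representation vectors of the rank-`n` whirl. -/
def whirlVec (n : ℕ) : Fin n ⊕ Fin n → (Fin n → ℚ) :=
  Sum.elim (fun i j => if (j : ℕ) = (i : ℕ) then 1 else 0)
    (fun i j => (if (j : ℕ) = (i : ℕ) then 1 else 0) +
      (if (j : ℕ) = ((i : ℕ) + 1) % n then (if (i : ℕ) = n - 1 then 2 else 1) else 0))

/-- `M` is a whirl (of some rank at least 2). -/
def IsWhirlMatroid (M : Matroid α) : Prop :=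
  ∃ n : ℕ, 2 ≤ n ∧ ∃ g : α → (Fin n ⊕ Fin n),
    Set.BijOn g M.E Set.univ ∧ M.IsRepBy ℚ (fun x => whirlVec n (g x))

/-- `P` is the generalized parallel connection of `M₁` and `M₂` along `T`:
its ground set is `E(M₁) ∪ E(M₂)`, where `E(M₁) ∩ E(M₂) = T`, and its flats are
exactly the sets whose intersections with `E(M₁)` and `E(M₂)` are flats. -/
def IsGPC (P M₁ M₂ : Matroid α) (T : Set α) : Prop :=
  M₁.E ∩ M₂.E = T ∧ P.E = M₁.E ∪ M₂.E ∧
    ∀ F, P.IsFlat F ↔ (F ⊆ P.E ∧ M₁.IsFlat (F ∩ M₁.E) ∧ M₂.IsFlat (F ∩ M₂.E))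

/-- The conditions under which the generalized parallel connection
`M₁ ⊠_T M₂` is defined: `T = E(M₁) ∩ E(M₂)` is a modular flat of `M₂` and a common
restriction of `M₁` and `M₂`. -/
def GPCDefined (M₁ M₂ : Matroid α) (T : Set α) : Prop :=
  M₁.E ∩ M₂.E = T ∧ M₂.ModularFlat T ∧ (M₁ ↾ T) = (M₂ ↾ T)

/-- The set of elements of an (ordered) triangle. -/
def triSet (p : α × α × α) : Set α := {p.1, p.2.1, p.2.2}

/-- `M` is obtained from `N` by gluing, for each `i`, a wheel of rank `n i` onto the
triangle `Tr i` of `N`, deleting the set `X` afterwards (Definition 2.6): take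
iterated generalized parallel connections with wheels `W i` along the triangles,
then delete the set `X` of triangle elements, which must contain every hub element
`bᵢ` that is not a spoke element `aⱼ` or `cⱼ` of another triangle. -/
def GluedWheelsData (M N : Matroid α) (t : ℕ) (Tr : Fin t → α × α × α)
    (n : Fin t → ℕ) (X : Set α) : Prop :=
  ∃ (W : Fin t → Matroid α) (Ns : ℕ → Matroid α),
    (∀ i, N.IsTriangle (triSet (Tr i))) ∧
    (∀ i, (W i).IsWheel (n i) (Tr i).1 (Tr i).2.1 (Tr i).2.2) ∧
    Ns 0 = N ∧
    (∀ i : Fin t, IsGPC (Ns ((i : ℕ) + 1)) (Ns (i : ℕ)) (W i) (triSet (Tr i))) ∧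
    X ⊆ (⋃ i, triSet (Tr i)) ∧
    (∀ i : Fin t, (Tr i).2.1 ∈ X ∨ ∃ j : Fin t, (Tr i).2.1 = (Tr j).1 ∨ (Tr i).2.1 = (Tr j).2.2) ∧
    M = (Ns t).del X

/-- `M` is obtained from `N` by gluing wheels onto the triangles `Tr 0, …, Tr (t-1)`
of `N` (Definition 2.6). -/
def GluedWheels (M N : Matroid α) (t : ℕ) (Tr : Fin t → α × α × α) : Prop :=
  ∃ (n : Fin t → ℕ) (X : Set α), GluedWheelsData M N t Tr n X

/-- Gluing a single wheel of prescribed rank `n` onto the triangle `(a,b,c)`. -/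
def GluedOneWheel (M N : Matroid α) (a b c : α) (n : ℕ) : Prop :=
  ∃ X : Set α, GluedWheelsData M N 1 (fun _ => (a, b, c)) (fun _ => n) X
/-- In a fan whose parity bit is `b` (`b = true` iff the first triple is a triangle),
the element at (0-based) index `i` is a spoke element iff `spokeIdx b i`. -/
def spokeIdx (b : Bool) (i : ℕ) : Prop := (Even i ↔ b = true)

/-- `l` is a fan of `M` with parity bit `b`: a sequence of at least 3 distinct
elements whose consecutive triples alternate between triangles and triads,
starting with a triangle iff `b = true`. -/
def IsFanB (M : Matroid α) (b : Bool) (l : List α) : Prop :=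
  l.Nodup ∧ 3 ≤ l.length ∧ {x | x ∈ l} ⊆ M.E ∧
    ∀ (i : ℕ) (h : i + 2 < l.length),
      ((Even i ↔ b = true) →
        M.IsTriangle {l.get ⟨i, by omega⟩, l.get ⟨i+1, by omega⟩, l.get ⟨i+2, h⟩}) ∧
      (¬ (Even i ↔ b = true) →
        M.IsTriad {l.get ⟨i, by omega⟩, l.get ⟨i+1, by omega⟩, l.get ⟨i+2, h⟩})

/-- `l` is a fan of `M`. -/
def IsFan (M : Matroid α) (l : List α) : Prop := ∃ b, M.IsFanB b l

/-- `M` is obtained from `N` by a fan-lengthening move on the fan `l` of `M`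
(Definition 2.1). -/
def FanLengthening (M N : Matroid α) (l : List α) : Prop :=
  M.ThreeConn ∧ N.ThreeConn ∧
  ∃ (b : Bool) (h4 : 4 ≤ l.length), M.IsFanB b l ∧
    ((N = M.del {l.get ⟨0, by omega⟩} ∧ spokeIdx b 0) ∨
     (N = M.del {l.get ⟨l.length - 1, by omega⟩} ∧ spokeIdx b (l.length - 1)) ∨
     (N = M.con {l.get ⟨0, by omega⟩} ∧ ¬ spokeIdx b 0) ∨
     (N = M.con {l.get ⟨l.length - 1, by omega⟩} ∧ ¬ spokeIdx b (l.length - 1)) ∨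
     (5 ≤ l.length ∧ ∃ (i : ℕ) (h : i + 1 < l.length),
        (N = (M.con {l.get ⟨i, by omega⟩}).del {l.get ⟨i+1, h⟩} ∧
          ¬ spokeIdx b i ∧ spokeIdx b (i+1)) ∨
        (N = (M.con {l.get ⟨i+1, h⟩}).del {l.get ⟨i, by omega⟩} ∧
          spokeIdx b i ∧ ¬ spokeIdx b (i+1))))

/-- The sequence `F` is consistent with the sequence `G`: `F` is a (not necessarily
contiguous) subsequence of `G` or of its reversal. -/
def Consistent (F G : List α) : Prop := F.Sublist G ∨ F.Sublist G.reverse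

/-- A family of pairwise disjoint fans of `M`. -/
def FanFamily (M : Matroid α) (𝓕 : Set (List α)) : Prop :=
  (∀ F ∈ 𝓕, M.IsFan F) ∧
    ∀ F ∈ 𝓕, ∀ G ∈ 𝓕, F ≠ G → ∀ x, x ∈ F → x ∉ G

/-- `𝓕` is a covering family of `M` relative to `N` and `𝓕_N` (Definition 2.2). -/
def CoveringFamily (M N : Matroid α) (𝓕 𝓕N : Set (List α)) : Prop :=
  M.FanFamily 𝓕 ∧ 𝓕.encard = 𝓕N.encard ∧
    (∀ FN ∈ 𝓕N, ∃ F ∈ 𝓕, Consistent FN F) ∧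
    ∀ x ∈ M.E \ N.E, ∃ F ∈ 𝓕, x ∈ F

/-- The set of fan-extensions of `N` relative to `𝓕N` (Definition 2.3): the smallest
family of matroids containing `N` that is closed under fan-lengthening moves on fans
belonging to covering families. -/
inductive FanExt (N : Matroid α) (𝓕N : Set (List α)) : Matroid α → Prop
  | base : FanExt N 𝓕N N
  | lengthen {M M' : Matroid α} {𝓕 : Set (List α)} {F l : List α} :
      FanExt N 𝓕N M → CoveringFamily M N 𝓕 𝓕N → F ∈ 𝓕 →
      FanLengthening M' M l →
      (F.Sublist l ∨ F.Sublist l.reverse) →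
      ({x | x ∈ l} ⊆ {x | x ∈ F} ∪ (M'.E \ M.E)) →
      FanExt N 𝓕N M'
/-- Every square submatrix of `A` has determinant in `S`. -/
def SubdetsIn {R : Type} [CommRing R] {r : ℕ} (A : Matrix (Fin r) α R) (S : Set R) : Prop :=
  ∀ (k : ℕ) (f : Fin k → Fin r) (g : Fin k → α), Function.Injective f →
    Function.Injective g → (Matrix.of fun i j => A (f i) (g j)).det ∈ S

/-- The matrix `A` over a commutative ring represents the matroid `M`: a subset `I`
of the ground set is independent iff the columns of `I` contain a square submatrix of
size `|I|` with nonzero determinant. -/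
def RepMat {R : Type} [CommRing R] {r : ℕ} (A : Matrix (Fin r) α R) (M : Matroid α) : Prop :=
  ∀ I ⊆ M.E, (M.Indep I ↔ ∃ (k : ℕ) (f : Fin k → Fin r) (g : Fin k → α),
    Function.Injective f ∧ Function.Injective g ∧ Set.range g = I ∧
      (Matrix.of fun i j => A (f i) (g j)).det ≠ 0)

/-- `M` is representable over the partial field `(R, G)`: it is represented by a
matrix all of whose square subdeterminants lie in `G ∪ {0}`. -/
def PFRepresentable (R : Type) [CommRing R] (G : Set R) (M : Matroid α) : Prop :=
  ∃ (r : ℕ) (A : Matrix (Fin r) α R), SubdetsIn A (G ∪ {0}) ∧ RepMat A M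

end Matroid

/-- The underlying ring of the Hydra-5 partial field: `ℚ(α, β, γ)`. -/
abbrev H5Ring : Type := FractionRing (MvPolynomial (Fin 3) ℚ)

noncomputable def H5x (i : Fin 3) : H5Ring :=
  algebraMap (MvPolynomial (Fin 3) ℚ) H5Ring (MvPolynomial.X i)

/-- The generators of the group of the Hydra-5 partial field. -/
noncomputable def H5gens : Set H5Ring :=
  {-1, H5x 0, H5x 1, H5x 2, H5x 0 - 1, H5x 1 - 1, H5x 2 - 1,
    H5x 0 - H5x 2, H5x 2 - H5x 0 * H5x 1, (1 - H5x 2) - (1 - H5x 0) * H5x 1}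

/-- The set of elements of the subgroup of `ℚ(α,β,γ)ˣ` generated by the Hydra-5
generators, regarded as a set of ring elements. -/
noncomputable def H5Group : Set H5Ring :=
  {x | ∃ u : H5Ringˣ, u ∈ Subgroup.closure {v : H5Ringˣ | (v : H5Ring) ∈ H5gens} ∧ (u : H5Ring) = x}

/-- `M` is representable over the Hydra-5 partial field `ℍ₅`. -/
def H5Representable {α : Type} (M : Matroid α) : Prop :=
  Matroid.PFRepresentable H5Ring H5Group M

/-- The underlying ring of Semple's 2-uniform partial field `𝕌₂`: `ℚ(α₁, α₂)`. -/
abbrev U2Ring : Type := FractionRing (MvPolynomial (Fin 2) ℚ)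

noncomputable def U2x (i : Fin 2) : U2Ring :=
  algebraMap (MvPolynomial (Fin 2) ℚ) U2Ring (MvPolynomial.X i)

/-- The generators of the group of the 2-uniform partial field `𝕌₂`. -/
noncomputable def U2gens : Set U2Ring :=
  {-1, U2x 0, U2x 1, U2x 0 - 1, U2x 1 - 1, U2x 0 - U2x 1}

noncomputable def U2Group : Set U2Ring :=
  {x | ∃ u : U2Ringˣ, u ∈ Subgroup.closure {v : U2Ringˣ | (v : U2Ring) ∈ U2gens} ∧ (u : U2Ring) = x}

/-- `M` is representable over the 2-uniform partial field `𝕌₂`. -/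
def U2Representable {α : Type} (M : Matroid α) : Prop :=
  Matroid.PFRepresentable U2Ring U2Group M

/-- `𝓜₅`: the strictly `{U_{2,5}, U_{3,5}}`-fragile matroids representable over `ℍ₅`. -/
def M5mem {α : Type} (M : Matroid α) : Prop :=
  M.StrictlyU25U35Fragile ∧ H5Representable M

/-- `𝓜₂`: the strictly `{U_{2,5}, U_{3,5}}`-fragile matroids representable over `𝕌₂`. -/
def M2mem {α : Type} (M : Matroid α) : Prop :=
  M.StrictlyU25U35Fragile ∧ U2Representable M

section Matrices

variable {α : Type} {F : Type} [Field F] {r s : ℕ}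

/-- Two matrix representations over a field are equivalent if one is obtained from
the other by row operations (an invertible row transformation), column scaling and
a field automorphism. -/
def MatRepEquiv (A B : Matrix (Fin r) α F) : Prop :=
  ∃ (Q : Matrix (Fin r) (Fin r) F) (d : α → F) (σ : F ≃+* F),
    IsUnit Q.det ∧ (∀ j, d j ≠ 0) ∧
    ∀ i j, B i j = (∑ k, Q i k * σ (A k j)) * d j

/-- `M` has at least `n` pairwise inequivalent representations over the field `F`. -/
def HasNInequivReps (F : Type) [Field F] (M : Matroid α) (n : ℕ) : Prop :=
  ∃ (r : ℕ) (A : Fin n → Matrix (Fin r) α F),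
    (∀ i, Matroid.RepMat (A i) M) ∧ ∀ i j, i ≠ j → ¬ MatRepEquiv (A i) (A j)

/-- `B` is a representation of the minor `M / C ⧹ D` induced by the representation
`A` of `M`: after an invertible row transformation, the columns of `C` are supported
off the rows selected by `emb`, and `B` is read off from the selected rows. -/
def InducedRep (A : Matrix (Fin r) α F) (C : Set α) (B : Matrix (Fin s) α F) : Prop :=
  ∃ Q : Matrix (Fin r) (Fin r) F, IsUnit Q.det ∧ ∃ emb : Fin s ↪ Fin r,
    (∀ (i : Fin s), ∀ j ∈ C, (∑ k, Q (emb i) k * A k j) = 0) ∧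
    ∀ (i : Fin s) (j : α), j ∉ C → B i j = ∑ k, Q (emb i) k * A k j

end Matrices

section Pivot

variable {α : Type} [DecidableEq α] {R : Type} [CommRing R] {r : ℕ}

/-- The pivot of the matrix `A` on the entry `(p, q)`. -/
noncomputable def pivotMat (A : Matrix (Fin r) α R) (p : Fin r) (q : α) :
    Matrix (Fin r) α R :=
  fun i j =>
    if i = p then
      (if j = q then Ring.inverse (A p q) else Ring.inverse (A p q) * A p j)
    else
      (if j = q then - Ring.inverse (A p q) * A i q
       else A i j - A i q * Ring.inverse (A p q) * A p j)

/-- `B` is obtained from `A` by a (possibly empty) sequence of pivots on unit entries. -/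
def PivotReach (A B : Matrix (Fin r) α R) : Prop :=
  Relation.ReflTransGen (fun X Y => ∃ p q, IsUnit (X p q) ∧ Y = pivotMat X p q) A B

/-- The cross ratios of the matrix `A`: the values
`B i₁ j₁ * B i₂ j₂ * (B i₁ j₂)⁻¹ * (B i₂ j₁)⁻¹` over all matrices `B` obtained from
`A` by pivoting and all `2 × 2` submatrices of `B` whose entries are all units. -/
def crossRatios (A : Matrix (Fin r) α R) : Set R :=
  {x | ∃ B : Matrix (Fin r) α R, PivotReach A B ∧
    ∃ (i₁ i₂ : Fin r) (j₁ j₂ : α), i₁ ≠ i₂ ∧ j₁ ≠ j₂ ∧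
      IsUnit (B i₁ j₁) ∧ IsUnit (B i₁ j₂) ∧ IsUnit (B i₂ j₁) ∧ IsUnit (B i₂ j₂) ∧
      x = B i₁ j₁ * B i₂ j₂ * Ring.inverse (B i₁ j₂) * Ring.inverse (B i₂ j₁)}

end Pivot

/-- The projection of a matrix over the product ring `⊗ᵢ GF(5)` onto its `c`-th
coordinate. -/
def projMat {α : Type} {r k : ℕ} (A : Matrix (Fin r) α (Fin k → ZMod 5)) (c : Fin k) :
    Matrix (Fin r) α (ZMod 5) := fun i j => A i j c

/-- `A` is a representation of `M` over the product ring `⊗_{i=1}^k GF(5)`: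
every coordinate projection of `A` represents `M` over `GF(5)`. -/
def ProdRep {α : Type} {r k : ℕ} (A : Matrix (Fin r) α (Fin k → ZMod 5)) (M : Matroid α) : Prop :=
  ∀ c : Fin k, Matroid.RepMat (projMat A c) M

section Specific

open Matroid

/-- A labeled copy of the Fano matroid on ground set `{0,1,2,6,7,8,9} ⊆ ℕ` having
`(2,6,9)`, `(8,0,9)` and `(1,7,9)` as triangles, with `{6,0,7}` independent and
`{2,8,1}` a circuit. -/
def LabeledFano (F : Matroid ℕ) : Prop :=
  IsFano F ∧ F.E = {0, 1, 2, 6, 7, 8, 9} ∧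
    F.IsTriangle {2, 6, 9} ∧ F.IsTriangle {8, 0, 9} ∧ F.IsTriangle {1, 7, 9} ∧
    F.Indep {6, 0, 7} ∧ F.IsCircuit' {2, 8, 1}

/-- A labeled copy of `N₁₁`, the unique 3-connected Fano-fragile single-element
extension of `R₁₀`: the ground set is `{0, …, 10}`, deleting `10` gives `R₁₀`,
`(0, 10, 4)` is a triangle, and `N₁₁ / 10` has an `{F₇, F₇*}`-minor. -/
def IsN11L (N : Matroid ℕ) : Prop :=
  N.ThreeConn ∧ N.FanoFragile ∧ N.E = {n | n < 11} ∧
    IsR10Labeled (N.del {10}) ∧ N.IsTriangle {0, 10, 4} ∧ HasFanoMinor (N.con {10})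

/-- A copy of `N₁₂`: the 12-element binary matroid obtained from the Fano matroid by
gluing rank-3 wheels onto the triangles `(2,6,9)`, `(8,0,9)`, `(1,7,9)` and deleting
`{0,6,7,9}`. -/
def IsN12 (N : Matroid ℕ) : Prop :=
  ∃ F : Matroid ℕ, LabeledFano F ∧
    GluedWheelsData N F 3 ![(2, 6, 9), (8, 0, 9), (1, 7, 9)] (fun _ => 3)
      {0, 6, 7, 9}

/-- The columns of a graft representation: each element of the matroid is either an
edge of a graph on the vertex set `Fin k` (with column the sum of the incidence
vectors of its endpoints over `GF(2)`) or the distinguished graft column, the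
characteristic vector of the set `T` of graft vertices. -/
def graftCol (k : ℕ) (T : Finset (Fin k)) : Option (Fin k × Fin k) → (Fin k → ZMod 2)
  | none => fun v => if v ∈ T then 1 else 0
  | some (u, w) => fun v => (if v = u then 1 else 0) + (if v = w then 1 else 0)

/-- `M` has a graft representation: there are a graph `G` on vertex set `Fin k`, a
set `T` of vertices of `G`, and an assignment of the elements of `M` to the edges of
`G` together with one element assigned to the graft column `χ_T`, representing `M`
over `GF(2)`. -/
def HasGraftRep {α : Type} (M : Matroid α) : Prop :=
  ∃ (k : ℕ) (T : Finset (Fin k)) (f : α → Option (Fin k × Fin k)),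
    (∃ e ∈ M.E, ∀ x ∈ M.E, f x = none ↔ x = e) ∧
    M.IsRepBy (ZMod 2) (fun x => graftCol k T (f x))

/-- `P₆`: the 6-element rank-3 matroid with exactly one triangle. -/
def IsP6 {α : Type} (M : Matroid α) : Prop :=
  M.E.encard = 6 ∧ M.eRank' = 3 ∧ ∃! T : Set α, M.IsTriangle T

/-- A 4-element segment: four collinear points. -/
def Is4Segment {α : Type} (M : Matroid α) (A : Set α) : Prop :=
  A ⊆ M.E ∧ A.encard = 4 ∧ M.eRk' A = 2

/-- `X₈`: a specific 8-element 3-connected strictly `{U_{2,5},U_{3,5}}`-fragile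
`ℍ₅`-representable matroid having a 4-element segment and a 4-element cosegment. -/
def IsX8 (N : Matroid ℕ) : Prop :=
  M5mem N ∧ N.ThreeConn ∧ N.E.encard = 8 ∧
    (∃ S, Is4Segment N S) ∧ (∃ C, Is4Segment N✶ C)

/-- `Y₈`: a specific 8-element 3-connected strictly `{U_{2,5},U_{3,5}}`-fragile
`ℍ₅`-representable matroid. -/
def IsY8 (N : Matroid ℕ) : Prop :=
  M5mem N ∧ N.ThreeConn ∧ N.E.encard = 8

/-- `M_{9,9}`: a specific 9-element 3-connected strictly `{U_{2,5},U_{3,5}}`-fragile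
`ℍ₅`-representable matroid. -/
def IsM99 (N : Matroid ℕ) : Prop :=
  M5mem N ∧ N.ThreeConn ∧ N.E.encard = 9

/-- `M_{7,1}`: a specific 7-element rank-3 3-connected strictly
`{U_{2,5},U_{3,5}}`-fragile `ℍ₅`-representable matroid with a triangle `(1,3,2)`. -/
def IsM71 (N : Matroid ℕ) : Prop :=
  M5mem N ∧ N.ThreeConn ∧ N.E.encard = 7 ∧ N.eRank' = 3 ∧ N.IsTriangle {1, 3, 2}

/-- `M_{8,6}`: the 8-element matroid obtained from `M_{7,1}` by gluing a rank-3
wheel onto the triangle `(1,3,2)`. -/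
def IsM86 (N : Matroid ℕ) : Prop :=
  ∃ M71 : Matroid ℕ, IsM71 M71 ∧ GluedOneWheel N M71 1 3 2 3 ∧ N.E.encard = 8

/-- The rational representation vectors of the matroid `Θ_k` of Oxley, Semple and
Vertigan: `Sum.inl i` is `wᵢ` (a standard basis vector) and `Sum.inr i` is `zᵢ`,
a point of the segment `{z₁, …, z_k}` whose `j`-th coordinate is `i - j`. -/
def thetaVec (k : ℕ) : Fin k ⊕ Fin k → (Fin k → ℚ) :=
  Sum.elim (fun i j => if j = i then 1 else 0) (fun i j => (i : ℚ) - (j : ℚ))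

/-- `Θ` is a copy of the matroid `Θ_k` with `w` and `z` as its distinguished
labelings. -/
def IsTheta {α : Type} (Θ : Matroid α) (k : ℕ) (w z : Fin k → α) : Prop :=
  ∃ g : α → (Fin k ⊕ Fin k), Set.BijOn g Θ.E Set.univ ∧
    (∀ i, g (w i) = Sum.inl i) ∧ (∀ i, g (z i) = Sum.inr i) ∧
    Θ.IsRepBy ℚ (fun x => thetaVec k (g x))

/-- `M'` is obtained from `M` by a generalized `Δ-Y` exchange on the `k`-element
segment `A`: `M' = P_A(Θ_k, M) ⧹ A`, the generalized parallel connection of `M` with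
`Θ_k` along `A` (identified with the segment `{z₁, …, z_k}` of `Θ_k`), with `A`
deleted afterwards. -/
def DeltaY {α : Type} (M M' : Matroid α) (A : Set α) (k : ℕ) : Prop :=
  ∃ (Θ P : Matroid α) (w z : Fin k → α),
    IsTheta Θ k w z ∧ Set.range z = A ∧ M.E ∩ Θ.E = A ∧
    IsGPC P M Θ A ∧ M' = P.del A

/-- `M'` is a parallel extension of `M` by a single element. -/
def ParallelExt {α : Type} (M M' : Matroid α) : Prop :=
  ∃ e f : α, e ∉ M.E ∧ f ∈ M.E ∧ M'.del {e} = M ∧ M'.IsCircuit' {e, f}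

/-- `M'` is a series extension of `M` by a single element. -/
def SeriesExt {α : Type} (M M' : Matroid α) : Prop := ParallelExt M✶ M'✶

/-- One step in a path sequence: a generalized `Δ-Y` exchange on a 4-element
segment, a generalized `Δ-Y` exchange on a 4-element cosegment, a parallel or
series extension, or gluing a wheel onto a 3-element subset of a 4-element segment
or cosegment. -/
def PathStep (M M' : Matroid ℕ) : Prop :=
  (∃ A, Is4Segment M A ∧ DeltaY M M' A 4) ∨
  (∃ A, Is4Segment M✶ A ∧ DeltaY M✶ M'✶ A 4) ∨
  ParallelExt M M' ∨ SeriesExt M M' ∨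
  (∃ (a b c : ℕ) (n : ℕ) (A : Set ℕ), ({a, b, c} : Set ℕ) ⊆ A ∧
    (Is4Segment M A ∨ Is4Segment M✶ A) ∧ GluedOneWheel M' M a b c n)

/-- `M` can be obtained from a path sequence: it arises from `X₈` by repeatedly
performing the path-sequence steps. -/
def FromPathSeq (M : Matroid ℕ) : Prop :=
  ∃ X8 : Matroid ℕ, IsX8 X8 ∧ Relation.ReflTransGen PathStep X8 M

end Specific

/-!
Write the triangle as `T = {a, b, c}` and let `φ` be a binary representation. Simplicity makes
`φ` injective and nonzero on the ground set, and over `GF(2)` the span of `φ a, φ b` is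
`{0, φ a, φ b, φ a + φ b}`; hence `φ c = φ a + φ b` and the closure of `{a, b}` is `T`, a flat of
rank 2. By submodularity it suffices to show `r(T) + r(F) ≤ r(T ∪ F) + r(T ∩ F)` for every flat
`F`. If `F` meets `T` without containing it, an element of `T ∩ F` gives `r(T ∩ F) ≥ 1` and an
element of `T \ F` gives `r(T ∪ F) ≥ r(F) + 1`. If `F` misses `T`, then `b ∉ cl(F ∪ {a})`:
otherwise `φ b` or `φ b + φ a = φ c` lies in the span of `φ(F)`, putting `b` or `c` in `F`.
-/

section ZModTwo

theorem ZMod.eq_zero_or_eq_one (s : ZMod 2) : s = 0 ∨ s = 1 := by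
  revert s; decide

variable {V : Type*} [AddCommGroup V] [Module (ZMod 2) V]

theorem Submodule.mem_span_pair_zmod_two {u v w : V} :
    w ∈ span (ZMod 2) {u, v} ↔ w = 0 ∨ w = u ∨ w = v ∨ w = u + v := by
  rw [Submodule.mem_span_pair]
  constructor
  · rintro ⟨s, t, rfl⟩
    obtain rfl | rfl := ZMod.eq_zero_or_eq_one s <;>
      obtain rfl | rfl := ZMod.eq_zero_or_eq_one t <;> simp
  · rintro (rfl | rfl | rfl | rfl)
    exacts [⟨0, 0, by simp⟩, ⟨1, 0, by simp⟩, ⟨0, 1, by simp⟩, ⟨1, 1, by simp⟩]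

theorem Submodule.mem_span_insert_zmod_two {v w : V} {S : Set V} :
    w ∈ span (ZMod 2) (insert v S) ↔ w ∈ span (ZMod 2) S ∨ w + v ∈ span (ZMod 2) S := by
  rw [Submodule.mem_span_insert]
  constructor
  · rintro ⟨t, z, hz, rfl⟩
    obtain rfl | rfl := ZMod.eq_zero_or_eq_one t
    · left; simpa using hz
    · right; simpa [add_comm v, add_assoc, ZModModule.add_self] using hz
  · rintro (h | h)
    exacts [⟨0, w, h, by simp⟩,
      ⟨1, w + v, h, by rw [one_smul, add_left_comm, ZModModule.add_self, add_zero]⟩]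

end ZModTwo

namespace Matroid

variable {M : Matroid α} {F I T X : Set α} {a b c d e x y : α}

theorem eRk'_eq_eRk (M : Matroid α) (X : Set α) : M.eRk' X = M.eRk X := by
  refine le_antisymm (iSup₂_le fun I hI ↦ hI.1.encard_le_eRk_of_subset hI.2) ?_
  obtain ⟨I, hI⟩ := M.exists_isBasis' X
  rw [← hI.encard_eq_eRk]
  exact le_iSup₂ (f := fun J (_ : J ∈ {J | M.Indep J ∧ J ⊆ X}) ↦ J.encard) I
    ⟨hI.indep, hI.subset⟩

theorem IsCircuit'.isCircuit {C : Set α} (hC : M.IsCircuit' C) : M.IsCircuit C :=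
  isCircuit_iff.2 ⟨hC.1, fun _ hD hDC ↦
    by_contra fun hne ↦ (hC.2 _ (hDC.ssubset_of_ne hne)).not_dep hD⟩

theorem IsCircuit'.mem_closure_pair (hC : M.IsCircuit' {a, b, c}) (hac : a ≠ c) (hbc : b ≠ c) :
    c ∈ M.closure {a, b} := by
  have := hC.isCircuit.mem_closure_sdiff_singleton_of_mem (e := c) (by simp)
  rwa [insert_sdiff_of_notMem _ (by simpa using hac),
    insert_sdiff_of_notMem _ (by simpa using hbc), sdiff_self, insert_empty_eq] at this

theorem modularFlat_of_forall_le (hF : M.IsFlat F)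
    (h : ∀ F', M.IsFlat F' → M.eRk F + M.eRk F' ≤ M.eRk (F ∪ F') + M.eRk (F ∩ F')) :
    M.ModularFlat F := by
  refine ⟨hF, fun F' hF' ↦ ?_⟩
  simp only [eRk'_eq_eRk]
  exact le_antisymm (h F' hF') ((add_comm _ _).le.trans (M.eRk_inter_add_eRk_union_le F F'))

theorem eRk_add_eRk_le_of_subset (hTF : T ⊆ F) :
    M.eRk T + M.eRk F ≤ M.eRk (T ∪ F) + M.eRk (T ∩ F) := by
  rw [union_eq_right.2 hTF, inter_eq_left.2 hTF, add_comm]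

theorem eRk_add_eRk_le_of_nonloop_mem_inter (hT : M.eRk T ≤ 2) (hF : M.IsFlat F)
    (hx : M.IsNonloop x) (hxTF : x ∈ T ∩ F) (hyT : y ∈ T) (hyE : y ∈ M.E) (hyF : y ∉ F) :
    M.eRk T + M.eRk F ≤ M.eRk (T ∪ F) + M.eRk (T ∩ F) :=
  calc M.eRk T + M.eRk F ≤ M.eRk F + 1 + 1 := by
        rw [add_comm, add_assoc, one_add_one_eq_two]; gcongr
    _ = M.eRk (insert y F) + M.eRk {x} := by
        rw [eRk_insert_eq_add_one ⟨hyE, hF.closure.symm ▸ hyF⟩, hx.eRk_eq]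
    _ ≤ M.eRk (T ∪ F) + M.eRk (T ∩ F) :=
        add_le_add (M.eRk_mono (insert_subset (.inl hyT) subset_union_right))
          (M.eRk_mono (singleton_subset_iff.2 hxTF))

theorem eRk_add_eRk_le_of_insert_insert (hT : M.eRk T ≤ 2) (haT : a ∈ T) (hbT : b ∈ T)
    (ha : a ∈ M.E \ M.closure F) (hb : b ∈ M.E \ M.closure (insert a F)) :
    M.eRk T + M.eRk F ≤ M.eRk (T ∪ F) + M.eRk (T ∩ F) :=
  calc M.eRk T + M.eRk F ≤ M.eRk F + 1 + 1 := by
        rw [add_comm, add_assoc, one_add_one_eq_two]; gcongr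
    _ = M.eRk (insert b (insert a F)) := by
        rw [eRk_insert_eq_add_one hb, eRk_insert_eq_add_one ha]
    _ ≤ M.eRk (T ∪ F) :=
        M.eRk_mono (insert_subset (.inl hbT) (insert_subset (.inl haT) subset_union_right))
    _ ≤ M.eRk (T ∪ F) + M.eRk (T ∩ F) := le_self_add

section Representation

variable {𝔽 : Type} [Field 𝔽] {V : Type*} [AddCommGroup V] [Module 𝔽 V] {φ : α → V}

theorem IsRepBy.mem_closure_iff_of_indep (hφ : M.IsRepBy 𝔽 φ) (hI : M.Indep I)
    (he : e ∈ M.E) : e ∈ M.closure I ↔ φ e ∈ Submodule.span 𝔽 (φ '' I) := by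
  by_cases heI : e ∈ I
  · exact iff_of_true (M.mem_closure_of_mem' heI he) (Submodule.subset_span ⟨e, heI, rfl⟩)
  have hIe : insert e I ⊆ M.E := insert_subset he hI.subset_ground
  have hφI : LinearIndepOn 𝔽 φ I := (hφ I hI.subset_ground).1 hI
  rw [hI.mem_closure_iff_of_notMem heI, dep_iff, and_iff_left hIe, hφ _ hIe,
    ← LinearIndepOn, linearIndepOn_insert heI, and_iff_right hφI, not_not]

theorem IsRepBy.mem_closure_iff (hφ : M.IsRepBy 𝔽 φ) (hX : X ⊆ M.E) (he : e ∈ M.E) :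
    e ∈ M.closure X ↔ φ e ∈ Submodule.span 𝔽 (φ '' X) := by
  obtain ⟨I, hI⟩ := M.exists_isBasis X
  rw [← hI.closure_eq_closure, hφ.mem_closure_iff_of_indep hI.indep he]
  suffices Submodule.span 𝔽 (φ '' I) = Submodule.span 𝔽 (φ '' X) by rw [this]
  refine le_antisymm (Submodule.span_mono (image_mono hI.subset)) (Submodule.span_le.2 ?_)
  rintro _ ⟨x, hx, rfl⟩
  exact (hφ.mem_closure_iff_of_indep hI.indep (hX hx)).1 (hI.subset_closure hx)

theorem SimpleM.isNonloop (hs : M.SimpleM) (he : e ∈ M.E) : M.IsNonloop e :=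
  indep_singleton.1 (hs _ (singleton_subset_iff.2 he) (by simp))

theorem SimpleM.ne_zero_of_isRepBy (hs : M.SimpleM) (hφ : M.IsRepBy 𝔽 φ) (he : e ∈ M.E) :
    φ e ≠ 0 :=
  ((hφ _ (singleton_subset_iff.2 he)).1 (indep_singleton.2 (hs.isNonloop he))).ne_zero
    ⟨e, rfl⟩

theorem SimpleM.injOn_of_isRepBy (hs : M.SimpleM) (hφ : M.IsRepBy 𝔽 φ) : InjOn φ M.E := by
  intro x hx y hy hxy
  by_contra hne
  have hxy_ind : M.Indep {x, y} := hs _ (pair_subset hx hy) (encard_pair hne).le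
  have hφxy : LinearIndepOn 𝔽 φ {x, y} := (hφ _ hxy_ind.subset_ground).1 hxy_ind
  exact hne (hφxy.injOn (by simp) (by simp) hxy)

end Representation

variable {V : Type*} [AddCommGroup V] [Module (ZMod 2) V] {φ : α → V}

theorem SimpleM.mem_closure_pair_iff (hs : M.SimpleM) (hφ : M.IsRepBy (ZMod 2) φ)
    (ha : a ∈ M.E) (hb : b ∈ M.E) :
    d ∈ M.closure {a, b} ↔ d ∈ M.E ∧ (d = a ∨ d = b ∨ φ d = φ a + φ b) := by
  have hab : {a, b} ⊆ M.E := pair_subset ha hb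
  refine ⟨fun hd ↦ ?_, fun ⟨hd, h⟩ ↦ ?_⟩
  · have hdE := M.closure_subset_ground _ hd
    rw [hφ.mem_closure_iff hab hdE, image_pair, Submodule.mem_span_pair_zmod_two] at hd
    refine ⟨hdE, ?_⟩
    rcases hd with h | h | h | h
    · exact absurd h (hs.ne_zero_of_isRepBy hφ hdE)
    · exact .inl (hs.injOn_of_isRepBy hφ hdE ha h)
    · exact .inr (.inl (hs.injOn_of_isRepBy hφ hdE hb h))
    · exact .inr (.inr h)
  · rw [hφ.mem_closure_iff hab hd, image_pair, Submodule.mem_span_pair_zmod_two]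
    rcases h with rfl | rfl | h
    exacts [.inr (.inl rfl), .inr (.inr (.inl rfl)), .inr (.inr (.inr h))]

theorem SimpleM.closure_pair_eq (hs : M.SimpleM) (hφ : M.IsRepBy (ZMod 2) φ)
    (ha : a ∈ M.E) (hb : b ∈ M.E) (hc : c ∈ M.E) (hsum : φ c = φ a + φ b) :
    M.closure {a, b} = {a, b, c} := by
  ext d
  rw [hs.mem_closure_pair_iff hφ ha hb, ← hsum]
  simp only [mem_insert_iff, mem_singleton_iff]
  constructor
  · rintro ⟨hd, h | h | h⟩
    exacts [.inl h, .inr (.inl h), .inr (.inr (hs.injOn_of_isRepBy hφ hd hc h))]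
  · rintro (rfl | rfl | rfl)
    exacts [⟨ha, .inl rfl⟩, ⟨hb, .inr (.inl rfl)⟩, ⟨hc, .inr (.inr rfl)⟩]

theorem IsRepBy.notMem_closure_insert_of_add_eq (hφ : M.IsRepBy (ZMod 2) φ) (hF : M.IsFlat F)
    (ha : a ∈ M.E) (hb : b ∈ M.E) (hc : c ∈ M.E) (hsum : φ c = φ a + φ b) (hbF : b ∉ F)
    (hcF : c ∉ F) : b ∉ M.closure (insert a F) := by
  rw [hφ.mem_closure_iff (insert_subset ha hF.subset_ground) hb, image_insert_eq,
    Submodule.mem_span_insert_zmod_two, add_comm, ← hsum,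
    ← hφ.mem_closure_iff hF.subset_ground hb, ← hφ.mem_closure_iff hF.subset_ground hc,
    hF.closure]
  exact not_or_intro hbF hcF

theorem SimpleM.modularFlat_of_add_eq (hs : M.SimpleM) (hφ : M.IsRepBy (ZMod 2) φ)
    (ha : a ∈ M.E) (hb : b ∈ M.E) (hc : c ∈ M.E) (hab : a ≠ b) (hsum : φ c = φ a + φ b) :
    M.ModularFlat {a, b, c} := by
  have hE : {a, b, c} ⊆ M.E := insert_subset ha (pair_subset hb hc)
  have hcl : M.closure {a, b} = {a, b, c} := hs.closure_pair_eq hφ ha hb hc hsum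
  have hrk : M.eRk {a, b, c} ≤ 2 := by
    rw [← hcl, eRk_closure_eq, ← encard_pair hab]
    exact M.eRk_le_encard _
  refine modularFlat_of_forall_le (hcl ▸ M.isFlat_closure _) fun F hF ↦ ?_
  by_cases hTF : {a, b, c} ⊆ F
  · exact eRk_add_eRk_le_of_subset hTF
  by_cases hTF' : a ∉ F ∧ b ∉ F ∧ c ∉ F
  · obtain ⟨haF, hbF, hcF⟩ := hTF'
    exact eRk_add_eRk_le_of_insert_insert hrk (by simp) (by simp) ⟨ha, hF.closure.symm ▸ haF⟩
      ⟨hb, hφ.notMem_closure_insert_of_add_eq hF ha hb hc hsum hbF hcF⟩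
  obtain ⟨y, hyT, hyF⟩ := not_subset.1 hTF
  obtain ⟨x, hxT, hxF⟩ : ∃ x ∈ ({a, b, c} : Set α), x ∈ F := by
    simpa only [exists_mem_insert, mem_singleton_iff, exists_eq_left, not_and_or, not_not]
      using hTF'
  exact eRk_add_eRk_le_of_nonloop_mem_inter hrk hF (hs.isNonloop (hE hxT)) ⟨hxT, hxF⟩ hyT
    (hE hyT) hyF

end Matroid

open Matroid in
/-- In a simple binary matroid, every triangle is a modular
flat. -/
theorem statement_10 {α : Type} (M : Matroid α) (hs : M.SimpleM) (hb : M.Binary)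
    (T : Set α) (hT : M.IsTriangle T) : M.ModularFlat T := by
  obtain ⟨hC, h3⟩ := hT
  obtain ⟨a, b, c, hab, hac, hbc, rfl⟩ := encard_eq_three.1 h3
  obtain ⟨φ, hφ⟩ := hb
  have hE : {a, b, c} ⊆ M.E := hC.1.subset_ground
  have ha : a ∈ M.E := hE (by simp)
  have hb : b ∈ M.E := hE (by simp)
  have hc : c ∈ M.E := hE (by simp)
  have hsum : φ c = φ a + φ b :=
    (((hs.mem_closure_pair_iff hφ ha hb).1 (hC.mem_closure_pair hac hbc)).2.resolve_left
      hac.symm).resolve_left hbc.symm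
  exact hs.modularFlat_of_add_eq hφ ha hb hc hab hsum
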